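/- arXiv:2307.09792 — 10 statements merged into one kernel-verified Lean document; each statement's English description precedes it below -/
import Mathlib

section
/- Let Z be a finite set with |Z| = 2k+1, and let H be the class of all functions h : Z → {0,1} with exactly k ones. Then for every h ∈ H and every subset S ⊆ Z with |S| = k-1, S is not a teaching set of h with respect to H. Hence the minimum teaching set size of each h ∈ H equals k. -/
/-- A set `S` is a teaching set of `c` with respect to the class `C`:
every other concept in `C` differs from `c` on some point of `S`. -/
def IsTeachingSet {X : Type*} (C : Finset (X → Bool)) (c : X → Bool) (S : Finset X) : Prop :=
  ∀ c' ∈ C, c' ≠ c → ∃ x ∈ S, c x ≠ c' x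

/-- Minimum teaching set size of `c` with respect to `C`. -/
noncomputable def TS {X : Type*} (C : Finset (X → Bool)) (c : X → Bool) : ℕ :=
  sInf {n | ∃ S : Finset X, S.card = n ∧ IsTeachingSet C c S}

/-- A teaching plan: an ordering of all concepts of `C` (as first components)
together with sets that teach each concept w.r.t. the remaining suffix. -/
def IsTeachingPlan {X : Type*} [Fintype X] [DecidableEq X]
    (C : Finset (X → Bool)) (L : List ((X → Bool) × Finset X)) : Prop :=
  (L.map Prod.fst).Nodup ∧ (L.map Prod.fst).toFinset = C ∧
  ∀ i (hi : i < L.length),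
    IsTeachingSet ((L.drop i).map Prod.fst).toFinset (L.get ⟨i, hi⟩).1 (L.get ⟨i, hi⟩).2

/-- Recursive teaching dimension. -/
noncomputable def RTD {X : Type*} [Fintype X] [DecidableEq X] (C : Finset (X → Bool)) : ℕ :=
  sInf {k | ∃ L, IsTeachingPlan C L ∧ ∀ p ∈ L, p.2.card ≤ k}

/-- The gadget class: all boolean functions on `Z` with exactly `k` ones. -/
def gadgetH (Z : Type*) [Fintype Z] [DecidableEq Z] (k : ℕ) : Finset (Z → Bool) :=
  Finset.univ.filter fun h => (Finset.univ.filter fun z => h z = true).card = k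

lemma gadget_no_small {Z : Type*} [Fintype Z] [DecidableEq Z] (k : ℕ)
    (hZ : Fintype.card Z = 2 * k + 1)
    (h : Z → Bool) (hh : h ∈ gadgetH Z k)
    (S : Finset Z) (hS : S.card + 1 = k) : ¬ IsTeachingSet (gadgetH Z k) h S := by
  intro hT
  simp only [gadgetH, Finset.mem_filter, Finset.mem_univ, true_and] at hh
  have hNcard : (Finset.univ.filter fun z => ¬ (h z = true)).card = k + 1 := by
    have := Finset.card_filter_add_card_filter_not
      (s := (Finset.univ : Finset Z)) (p := fun z => h z = true)
    rw [Finset.card_univ, hZ] at this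
    omega
  set P := Finset.univ.filter fun z => h z = true with hPdef
  have hpex : (P \ S).Nonempty := by
    apply Finset.sdiff_nonempty.mpr
    intro hsub
    have := Finset.card_le_card hsub
    omega
  obtain ⟨p, hp⟩ := hpex
  rw [Finset.mem_sdiff] at hp
  have hnex : ((Finset.univ.filter fun z => ¬ (h z = true)) \ S).Nonempty := by
    apply Finset.sdiff_nonempty.mpr
    intro hsub
    have := Finset.card_le_card hsub
    omega
  obtain ⟨n, hn⟩ := hnex
  rw [Finset.mem_sdiff, Finset.mem_filter] at hn
  have hhp : h p = true := (Finset.mem_filter.mp hp.1).2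
  have hhn : h n = false := by
    have := hn.1.2; simpa using this
  have hpn : p ≠ n := by
    intro e; rw [e, hhn] at hhp; exact Bool.false_ne_true hhp
  set h' : Z → Bool := Function.update (Function.update h p false) n true with hh'def
  have h'p : h' p = false := by
    simp [hh'def, Function.update, hpn]
  have h'n : h' n = true := by simp [hh'def, Function.update]
  have h'other : ∀ z, z ≠ p → z ≠ n → h' z = h z := by
    intro z hzp hzn
    simp [hh'def, Function.update, hzp, hzn]
  have hones : (Finset.univ.filter fun z => h' z = true) = insert n (P.erase p) := by
    ext z
    simp only [Finset.mem_filter, Finset.mem_univ, true_and, Finset.mem_insert,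
      Finset.mem_erase, hPdef]
    rcases eq_or_ne z n with rfl | hzn
    · simp [h'n]
    · rcases eq_or_ne z p with rfl | hzp
      · simp [h'p, hzn, hpn]
      · rw [h'other z hzp hzn]
        simp [hzn, hzp]
  have hh' : h' ∈ gadgetH Z k := by
    simp only [gadgetH, Finset.mem_filter, Finset.mem_univ, true_and]
    rw [hones, Finset.card_insert_of_notMem, Finset.card_erase_of_mem hp.1, hh]
    · omega
    · intro hmem
      have := Finset.mem_of_mem_erase hmem
      rw [hPdef, Finset.mem_filter] at this
      rw [hhn] at this
      exact Bool.false_ne_true this.2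
  have hne : h' ≠ h := by
    intro e
    rw [e, hhp] at h'p
    simp at h'p
  obtain ⟨x, hxS, hx⟩ := hT h' hh' hne
  apply hx
  have hxp : x ≠ p := fun e => hp.2 (e ▸ hxS)
  have hxn : x ≠ n := fun e => hn.2 (e ▸ hxS)
  exact (h'other x hxp hxn).symm

theorem stmt1 {Z : Type*} [Fintype Z] [DecidableEq Z] (k : ℕ)
    (hZ : Fintype.card Z = 2 * k + 1)
    (h : Z → Bool) (hh : h ∈ gadgetH Z k) :
    (∀ S : Finset Z, S.card + 1 = k → ¬ IsTeachingSet (gadgetH Z k) h S) ∧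
      TS (gadgetH Z k) h = k := by
  have hhc : (Finset.univ.filter fun z => h z = true).card = k := by
    simpa [gadgetH] using hh
  refine ⟨fun S hS => gadget_no_small k hZ h hh S hS, ?_⟩
  set P := Finset.univ.filter fun z => h z = true with hPdef
  have hteach : IsTeachingSet (gadgetH Z k) h P := by
    intro h' hh' hne
    by_contra hcon
    push_neg at hcon
    apply hne
    have hsub : P ⊆ Finset.univ.filter fun z => h' z = true := by
      intro z hz
      rw [Finset.mem_filter]
      refine ⟨Finset.mem_univ _, ?_⟩
      have := hcon z hz
      rw [← this]
      exact (Finset.mem_filter.mp hz).2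
    have hcard : (Finset.univ.filter fun z => h' z = true).card = k := by
      simpa [gadgetH] using hh'
    have heq : (Finset.univ.filter fun z => h' z = true) = P :=
      (Finset.eq_of_subset_of_card_le hsub (by rw [hcard, hhc])).symm
    funext z
    by_cases hz : z ∈ P
    · rw [(hcon z hz).symm]
    · have h1 : h z = false := by
        have := hz; rw [hPdef, Finset.mem_filter] at this
        simpa using fun e => this ⟨Finset.mem_univ _, e⟩
      have h2 : h' z = false := by
        rw [← heq, Finset.mem_filter] at hz
        simpa using fun e => hz ⟨Finset.mem_univ _, e⟩
      rw [h1, h2]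
  have hmem : k ∈ {n | ∃ S : Finset Z, S.card = n ∧ IsTeachingSet (gadgetH Z k) h S} :=
    ⟨P, hhc, hteach⟩
  refine le_antisymm (Nat.sInf_le hmem) ?_
  apply le_csInf ⟨k, hmem⟩
  rintro n ⟨S, hScard, hSteach⟩
  by_contra hlt
  push_neg at hlt
  have hk1 : 1 ≤ k := by omega
  obtain ⟨S', hSS', -, hS'card⟩ := Finset.exists_subsuperset_card_eq
    (S.subset_univ) (by omega : S.card ≤ k - 1)
    (by rw [Finset.card_univ, hZ]; omega)
  have hS'teach : IsTeachingSet (gadgetH Z k) h S' := by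
    intro c' hc' hne
    obtain ⟨x, hx, hx2⟩ := hSteach c' hc' hne
    exact ⟨x, hSS' hx, hx2⟩
  exact gadget_no_small k hZ h hh S' (by omega) hS'teach
end

section
/- Let Z be a finite set with |Z| = 2k+1 and let H be the class of all functions h : Z → {0,1} with exactly k ones. If S ⊆ Z has |S| = k and S is a teaching set of some h ∈ H with respect to H, then h(x) = 1 for all x ∈ S (i.e., S = h⁻¹(1)). -/
theorem stmt2 {Z : Type*} [Fintype Z] [DecidableEq Z] (k : ℕ)
    (hZ : Fintype.card Z = 2 * k + 1)
    (h : Z → Bool) (hh : h ∈ gadgetH Z k)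
    (S : Finset Z) (hScard : S.card = k)
    (hTS : IsTeachingSet (gadgetH Z k) h S) :
    (∀ x ∈ S, h x = true) ∧ S = Finset.univ.filter fun z => h z = true := by
  simp only [gadgetH, Finset.mem_filter, Finset.mem_univ, true_and] at hh
  set T := Finset.univ.filter (fun z => h z = true) with hTdef
  by_cases hall : ∀ x ∈ S, h x = true
  · refine ⟨hall, ?_⟩
    apply Finset.eq_of_subset_of_card_le
    · intro x hx; simp [hTdef, hall x hx]
    · rw [hh, hScard]
  · exfalso
    push_neg at hall
    obtain ⟨x0, hx0S, hx0⟩ := hall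
    have hx0' : h x0 = false := by
      cases hx : h x0 <;> simp_all
    have hTnS : ¬ T ⊆ S := by
      intro hsub
      have hTeq : T = S := Finset.eq_of_subset_of_card_le hsub (by rw [hh, hScard])
      have : x0 ∈ T := hTeq ▸ hx0S
      simp [hTdef, hx0'] at this
    obtain ⟨u, huT, huS⟩ := Finset.not_subset.mp hTnS
    have hu : h u = true := by simpa [hTdef] using huT
    have hcard : (S ∪ T).card < Fintype.card Z := by
      calc (S ∪ T).card ≤ S.card + T.card := Finset.card_union_le _ _
        _ = 2 * k := by rw [hh, hScard]; ring
        _ < 2 * k + 1 := lt_add_one _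
        _ = Fintype.card Z := hZ.symm
    have hne : (S ∪ T) ≠ Finset.univ := by
      intro heq
      rw [heq, Finset.card_univ] at hcard
      exact lt_irrefl _ hcard
    have hnsub : ¬ Finset.univ ⊆ S ∪ T := fun hs =>
      hne (Finset.univ_subset_iff.mp hs)
    obtain ⟨v, -, hv⟩ := Finset.not_subset.mp hnsub
    have hvS : v ∉ S := fun hmem => hv (Finset.mem_union_left _ hmem)
    have hvT : v ∉ T := fun hmem => hv (Finset.mem_union_right _ hmem)
    have hvf : h v = false := by
      cases hx : h v
      · rfl
      · exact absurd (by simp [hTdef, hx]) hvT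
    have huv : u ≠ v := by
      intro heq; rw [heq, hvf] at hu; exact Bool.false_ne_true hu
    set h' : Z → Bool := fun z => if z = u then false else if z = v then true else h z with hh'def
    have hfilt : (Finset.univ.filter fun z => h' z = true) = insert v (T.erase u) := by
      ext z
      simp only [Finset.mem_filter, Finset.mem_univ, true_and, Finset.mem_insert,
        Finset.mem_erase, hTdef, hh'def]
      by_cases hzu : z = u
      · subst hzu; simp [huv]
      · by_cases hzv : z = v
        · subst hzv; simp [hzu]
        · simp [hzu, hzv]
    have hvnm : v ∉ T.erase u := fun hmem => hvT (Finset.mem_of_mem_erase hmem)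
    have h'mem : h' ∈ gadgetH Z k := by
      simp only [gadgetH, Finset.mem_filter, Finset.mem_univ, true_and]
      have hk : 1 ≤ k := hh ▸ Finset.card_pos.mpr ⟨u, huT⟩
      rw [hfilt, Finset.card_insert_of_notMem hvnm, Finset.card_erase_of_mem huT, hh]
      omega
      -- k ≥ 1 since u ∈ T of card k
    have h'ne : h' ≠ h := by
      intro heq
      have : h' u = h u := congrFun heq u
      rw [hh'def] at this
      simp [hu] at this
    obtain ⟨x, hxS, hx⟩ := hTS h' h'mem h'ne
    apply hx
    have hxu : x ≠ u := fun heq => huS (heq ▸ hxS)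
    have hxv : x ≠ v := fun heq => hvS (heq ▸ hxS)
    simp [hh'def, hxu, hxv]
end

section
/- Let Z be a finite set with |Z| = 2k+1, let H be the class of all functions h : Z → {0,1} with exactly k ones, and let 𝟙 denote the all-one function on Z. Then for every h ∈ H, every teaching set of h with respect to H ∪ {𝟙} has size at least k+1. -/
theorem stmt3 {Z : Type*} [Fintype Z] [DecidableEq Z] (k : ℕ)
    (hZ : Fintype.card Z = 2 * k + 1)
    (h : Z → Bool) (hh : h ∈ gadgetH Z k)
    (S : Finset Z)
    (hTS : IsTeachingSet (insert (fun _ => true) (gadgetH Z k)) h S) :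
    k + 1 ≤ S.card := by
  by_contra hc
  push_neg at hc
  have hSk : S.card ≤ k := by omega
  simp only [gadgetH, Finset.mem_filter, Finset.mem_univ, true_and] at hh
  set A : Finset Z := Finset.univ.filter fun z => h z = true with hA
  -- h is not all-ones
  have hone : h ≠ fun _ => true := by
    intro he
    have : A = Finset.univ := by
      ext z; simp [hA, he]
    rw [this] at hh
    rw [Finset.card_univ, hZ] at hh
    omega
  obtain ⟨x0, hx0S, hx0⟩ := hTS (fun _ => true) (Finset.mem_insert_self _ _) (fun he => hone he.symm)
  have hx0f : h x0 = false := by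
    revert hx0; cases h x0 <;> simp
  -- a one of h outside S
  have hx0A : x0 ∉ A := by simp [hA, hx0f]
  have hSA : (S ∩ A).card < k := by
    have hsub : S ∩ A ⊆ S.erase x0 := by
      intro z hz
      simp only [Finset.mem_inter] at hz
      refine Finset.mem_erase.mpr ⟨?_, hz.1⟩
      rintro rfl; exact hx0A hz.2
    calc (S ∩ A).card ≤ (S.erase x0).card := Finset.card_le_card hsub
      _ < S.card := Finset.card_erase_lt_of_mem hx0S
      _ ≤ k := hSk
  have h1 : ∃ z0 ∈ A, z0 ∉ S := by
    by_contra hcon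
    push_neg at hcon
    have : A ⊆ S ∩ A := fun z hz => Finset.mem_inter.mpr ⟨hcon z hz, hz⟩
    have := Finset.card_le_card this
    omega
  obtain ⟨z0, hz0A, hz0S⟩ := h1
  -- a zero of h outside S
  have hAc : Aᶜ.card = k + 1 := by
    have := Finset.card_compl A
    rw [hh, hZ] at this
    omega
  have h2 : ∃ z1 ∈ Aᶜ, z1 ∉ S := by
    by_contra hcon
    push_neg at hcon
    have : Aᶜ ⊆ S := fun z hz => hcon z hz
    have := Finset.card_le_card this
    omega
  obtain ⟨z1, hz1A, hz1S⟩ := h2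
  have hz1f : h z1 = false := by
    have := Finset.mem_compl.mp hz1A
    simp only [hA, Finset.mem_filter, Finset.mem_univ, true_and] at this
    revert this; cases h z1 <;> simp
  have hz0t : h z0 = true := by
    simpa [hA] using hz0A
  have hne01 : z0 ≠ z1 := by rintro rfl; rw [hz0t] at hz1f; exact Bool.noConfusion hz1f
  -- the swapped function
  set h' : Z → Bool := fun z => if z = z0 then false else if z = z1 then true else h z with hh'
  have hA' : Finset.univ.filter (fun z => h' z = true) = insert z1 (A.erase z0) := by
    ext w
    simp only [hh', Finset.mem_filter, Finset.mem_univ, true_and, Finset.mem_insert,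
      Finset.mem_erase, hA]
    by_cases e0 : w = z0
    · subst e0; simp [hne01]
    · by_cases e1 : w = z1
      · subst e1; simp [Ne.symm hne01]
      · simp [e0, e1]
  have hkpos : 1 ≤ k := by
    have : A.Nonempty := ⟨z0, hz0A⟩
    have := Finset.card_pos.mpr this
    omega
  have hcard' : (Finset.univ.filter fun z => h' z = true).card = k := by
    rw [hA', Finset.card_insert_of_notMem, Finset.card_erase_of_mem hz0A, hh]
    · omega
    · intro hmem
      have := (Finset.mem_erase.mp hmem).2
      simp only [hA, Finset.mem_filter, Finset.mem_univ, true_and] at this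
      rw [this] at hz1f; exact Bool.noConfusion hz1f
  have hmem' : h' ∈ insert (fun _ => true) (gadgetH Z k) := by
    apply Finset.mem_insert_of_mem
    simp only [gadgetH, Finset.mem_filter, Finset.mem_univ, true_and]
    exact hcard'
  have hne' : h' ≠ h := by
    intro he
    have := congrFun he z0
    simp only [hh', if_pos rfl] at this
    rw [hz0t] at this; exact Bool.noConfusion this
  obtain ⟨x, hxS, hx⟩ := hTS h' hmem' hne'
  apply hx
  simp only [hh']
  rw [if_neg (by rintro rfl; exact hz0S hxS), if_neg (by rintro rfl; exact hz1S hxS)]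
end

section
/- For any finite concept class C over a finite domain X, RTD(C) ≤ ⌈log₂ |C|⌉, where RTD is the recursive teaching dimension. -/
lemma clog_half {n : ℕ} (hn : 2 ≤ n) : Nat.clog 2 (n / 2) + 1 ≤ Nat.clog 2 n := by
  rw [Nat.clog_of_two_le (by norm_num) hn]
  have : n / 2 ≤ (n + 2 - 1) / 2 := Nat.div_le_div_right (by omega)
  exact Nat.add_le_add_right (Nat.clog_mono_right 2 this) 1

lemma exists_small_TS {X : Type*} [DecidableEq X] :
    ∀ n (C : Finset (X → Bool)), C.card = n → C.Nonempty →
      ∃ c ∈ C, ∃ S : Finset X, S.card ≤ Nat.clog 2 C.card ∧ IsTeachingSet C c S := by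
  intro n
  induction n using Nat.strong_induction_on with
  | _ n ih =>
    intro C hcard hne
    by_cases h1 : C.card ≤ 1
    · obtain ⟨c, hc⟩ := hne
      refine ⟨c, hc, ∅, by simp, fun c' hc' hne' => absurd (Finset.card_le_one.mp h1 c' hc' c hc) hne'⟩
    · push_neg at h1
      obtain ⟨c₁, hc₁, c₂, hc₂, hne12⟩ := Finset.one_lt_card.mp h1
      obtain ⟨x, hx⟩ := Function.ne_iff.mp hne12
      set Db : Bool → Finset (X → Bool) := fun b => C.filter (fun c => c x = b) with hDb
      have hsum : (Db true).card + (Db false).card = C.card := by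
        rw [hDb]
        have := Finset.card_filter_add_card_filter_not (s := C)
          (p := fun c => c x = true)
        simpa using this
      have hDne : ∀ b, (Db b).Nonempty := by
        intro b
        rcases Bool.eq_false_or_eq_true (c₁ x) with h | h <;>
        rcases Bool.eq_false_or_eq_true (c₂ x) with h' | h' <;>
        · first
          | exact absurd (h.trans h'.symm) hx
          | cases b
            · first
              | exact ⟨c₁, Finset.mem_filter.mpr ⟨hc₁, h⟩⟩
              | exact ⟨c₂, Finset.mem_filter.mpr ⟨hc₂, h'⟩⟩
            · first
              | exact ⟨c₁, Finset.mem_filter.mpr ⟨hc₁, h⟩⟩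
              | exact ⟨c₂, Finset.mem_filter.mpr ⟨hc₂, h'⟩⟩
      set b : Bool := if (Db true).card ≤ (Db false).card then true else false with hb
      have hhalf : (Db b).card ≤ C.card / 2 := by
        rw [hb]; split_ifs with h <;> omega
      have hlt : (Db b).card < n := by
        have := Nat.div_lt_self (by omega : 0 < C.card) (by norm_num : 1 < 2)
        omega
      obtain ⟨c, hcmem, S, hScard, hTS⟩ := ih _ hlt (Db b) rfl (hDne b)
      have hcC : c ∈ C := (Finset.mem_filter.mp hcmem).1
      have hcxb : c x = b := (Finset.mem_filter.mp hcmem).2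
      refine ⟨c, hcC, insert x S, ?_, ?_⟩
      · calc (insert x S).card ≤ S.card + 1 := Finset.card_insert_le _ _
          _ ≤ Nat.clog 2 (Db b).card + 1 := by omega
          _ ≤ Nat.clog 2 (C.card / 2) + 1 := by
              exact Nat.add_le_add_right (Nat.clog_mono_right 2 hhalf) 1
          _ ≤ Nat.clog 2 C.card := clog_half h1
      · intro c' hc' hne'
        by_cases hcx : c' x = c x
        · obtain ⟨y, hy, hyne⟩ := hTS c' (Finset.mem_filter.mpr ⟨hc', hcx.trans hcxb⟩) hne'
          exact ⟨y, Finset.mem_insert_of_mem hy, hyne⟩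
        · exact ⟨x, Finset.mem_insert_self _ _, fun h => hcx h.symm⟩

lemma exists_plan {X : Type*} [Fintype X] [DecidableEq X] :
    ∀ n (C : Finset (X → Bool)), C.card = n →
      ∃ L, IsTeachingPlan C L ∧ ∀ p ∈ L, p.2.card ≤ Nat.clog 2 C.card := by
  intro n
  induction n using Nat.strong_induction_on with
  | _ n ih =>
    intro C hcard
    rcases C.eq_empty_or_nonempty with rfl | hne
    · exact ⟨[], ⟨List.nodup_nil, by simp, fun i hi => absurd hi (by simp)⟩, by simp⟩
    · obtain ⟨c, hcC, S, hScard, hTS⟩ := exists_small_TS C.card C rfl hne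
      have hlt : (C.erase c).card < n := by
        have := Finset.card_pos.mpr hne
        rw [Finset.card_erase_of_mem hcC]; omega
      obtain ⟨L', ⟨hnd', htf', hts'⟩, hbd'⟩ := ih _ hlt (C.erase c) rfl
      have hcnot : c ∉ L'.map Prod.fst := by
        intro h
        have : c ∈ (L'.map Prod.fst).toFinset := List.mem_toFinset.mpr h
        rw [htf'] at this
        exact Finset.notMem_erase c C this
      refine ⟨(c, S) :: L', ⟨List.nodup_cons.mpr ⟨hcnot, hnd'⟩, ?_, ?_⟩, ?_⟩
      · simp only [List.map_cons, List.toFinset_cons, htf']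
        exact Finset.insert_erase hcC
      · intro i hi
        match i with
        | 0 =>
          simp only [List.drop_zero, List.map_cons, List.toFinset_cons, htf', List.get]
          rw [Finset.insert_erase hcC]
          exact hTS
        | Nat.succ j =>
          have hj : j < L'.length := by simpa using hi
          exact hts' j hj
      · intro p hp
        rcases List.mem_cons.mp hp with rfl | hp'
        · exact hScard
        · calc p.2.card ≤ Nat.clog 2 (C.erase c).card := hbd' p hp'
            _ ≤ Nat.clog 2 C.card :=
              Nat.clog_mono_right 2 (Finset.card_erase_le ..)


theorem stmt5 {X : Type*} [Fintype X] [DecidableEq X] (C : Finset (X → Bool)) :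
    RTD C ≤ Nat.clog 2 C.card := by
  obtain ⟨L, hL, hbd⟩ := exists_plan C.card C rfl
  exact Nat.sInf_le ⟨L, hL, hbd⟩
end

section
/- For any finite concept class C, RTD(C) = max over nonempty subsets C' ⊆ C of TD_min(C'), where TD_min(C') = min_{c ∈ C'} TS(c, C') and TS(c, C') is the minimum teaching set size of c with respect to C'. -/
/-- Minimum over concepts of the minimum teaching set size. -/
noncomputable def TDmin {X : Type*} (C : Finset (X → Bool)) : ℕ :=
  sInf {n | ∃ c ∈ C, TS C c = n}

/-!
Removing, again and again, a concept of minimal teaching-set size from what is left of `C`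
gives a teaching plan whose sets have size at most `max_{C' ⊆ C} TDmin C'`. Conversely, given
any teaching plan and a nonempty `C' ⊆ C`, the first concept `c` of `C'` in the plan is taught
w.r.t. a suffix containing all of `C'`, so its set is a teaching set of `c` w.r.t. `C'`, and
`TDmin C'` is at most the size of that set.
-/

section TeachingSet

variable {X : Type*}

theorem IsTeachingSet.mono {C C' : Finset (X → Bool)} {c : X → Bool} {S : Finset X}
    (h : IsTeachingSet C c S) (hC' : C' ⊆ C) : IsTeachingSet C' c S :=
  fun c' hc' => h c' (hC' hc')

theorem isTeachingSet_univ [Fintype X] (C : Finset (X → Bool)) (c : X → Bool) :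
    IsTeachingSet C c Finset.univ := fun c' _ hne => by
  by_contra! h
  exact hne (funext fun x => (h x (Finset.mem_univ x)).symm)

theorem TS_le_card_of_isTeachingSet {C : Finset (X → Bool)} {c : X → Bool} {S : Finset X}
    (h : IsTeachingSet C c S) : TS C c ≤ S.card :=
  Nat.sInf_le ⟨S, rfl, h⟩

theorem exists_isTeachingSet_card_eq_TS [Fintype X] (C : Finset (X → Bool)) (c : X → Bool) :
    ∃ S : Finset X, S.card = TS C c ∧ IsTeachingSet C c S :=
  Nat.sInf_mem (s := {n | ∃ S : Finset X, S.card = n ∧ IsTeachingSet C c S})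
    ⟨_, Finset.univ, rfl, isTeachingSet_univ C c⟩

theorem TS_le_card [Fintype X] (C : Finset (X → Bool)) (c : X → Bool) :
    TS C c ≤ Fintype.card X :=
  TS_le_card_of_isTeachingSet (isTeachingSet_univ C c)

theorem TDmin_le_TS {C : Finset (X → Bool)} {c : X → Bool} (hc : c ∈ C) : TDmin C ≤ TS C c :=
  Nat.sInf_le ⟨c, hc, rfl⟩

theorem exists_TS_eq_TDmin {C : Finset (X → Bool)} (hC : C.Nonempty) :
    ∃ c ∈ C, TS C c = TDmin C := by
  obtain ⟨c, hc⟩ := hC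
  exact Nat.sInf_mem (s := {n | ∃ c ∈ C, TS C c = n}) ⟨_, c, hc, rfl⟩

theorem TDmin_le_card [Fintype X] (C : Finset (X → Bool)) : TDmin C ≤ Fintype.card X := by
  rcases C.eq_empty_or_nonempty with rfl | ⟨c, hc⟩
  · simp [TDmin]
  · exact (TDmin_le_TS hc).trans (TS_le_card C c)

end TeachingSet

section TeachingPlan

variable {X : Type*} [Fintype X] [DecidableEq X]

theorem isTeachingPlan_nil_iff {C : Finset (X → Bool)} : IsTeachingPlan C [] ↔ C = ∅ := by
  simp [IsTeachingPlan, eq_comm]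

theorem isTeachingPlan_cons_iff {C : Finset (X → Bool)} {c : X → Bool} {S : Finset X}
    {L : List ((X → Bool) × Finset X)} :
    IsTeachingPlan C ((c, S) :: L) ↔
      c ∈ C ∧ IsTeachingSet C c S ∧ IsTeachingPlan (C.erase c) L := by
  simp only [IsTeachingPlan, List.map_cons, List.nodup_cons, List.toFinset_cons]
  constructor
  · rintro ⟨⟨hcL, hnd⟩, hC, hteach⟩
    refine ⟨hC ▸ Finset.mem_insert_self _ _, ?_, hnd, ?_, fun i hi => ?_⟩
    · simpa [hC] using hteach 0 (by simp)
    · rw [← hC, Finset.erase_insert (mt List.mem_toFinset.mp hcL)]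
    · simpa using hteach (i + 1) (by simpa using hi)
  · rintro ⟨hc, hS, hnd, hL, hteach⟩
    refine ⟨⟨fun hcL => ?_, hnd⟩, by rw [hL, Finset.insert_erase hc], fun i hi => ?_⟩
    · simpa [hL] using List.mem_toFinset.mpr hcL
    · cases i with
      | zero => simpa [hL, Finset.insert_erase hc] using hS
      | succ i => simpa using hteach i (by simpa using hi)

theorem exists_isTeachingPlan_of_forall_TDmin_le {C : Finset (X → Bool)} {M : ℕ}
    (hM : ∀ C' ⊆ C, C'.Nonempty → TDmin C' ≤ M) :
    ∃ L, IsTeachingPlan C L ∧ ∀ p ∈ L, p.2.card ≤ M := by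
  induction C using Finset.strongInduction with
  | H C ih =>
  rcases C.eq_empty_or_nonempty with rfl | hne
  · exact ⟨[], isTeachingPlan_nil_iff.mpr rfl, by simp⟩
  obtain ⟨c, hc, hcTS⟩ := exists_TS_eq_TDmin hne
  obtain ⟨S, hScard, hS⟩ := exists_isTeachingSet_card_eq_TS C c
  obtain ⟨L, hL, hLM⟩ := ih (C.erase c) (Finset.erase_ssubset hc)
    fun C' hC' => hM C' (hC'.trans (C.erase_subset c))
  refine ⟨(c, S) :: L, isTeachingPlan_cons_iff.mpr ⟨hc, hS, hL⟩, ?_⟩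
  rw [List.forall_mem_cons, hScard, hcTS]
  exact ⟨hM C subset_rfl hne, hLM⟩

theorem TDmin_le_of_isTeachingPlan {C C' : Finset (X → Bool)} {L : List ((X → Bool) × Finset X)}
    {k : ℕ} (hL : IsTeachingPlan C L) (hk : ∀ p ∈ L, p.2.card ≤ k) (hC' : C' ⊆ C)
    (hne : C'.Nonempty) : TDmin C' ≤ k := by
  induction L generalizing C with
  | nil =>
    obtain ⟨c, hc⟩ := hne
    simpa [isTeachingPlan_nil_iff.mp hL] using hC' hc
  | cons p L ih =>
    obtain ⟨c, S⟩ := p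
    obtain ⟨-, hS, hL⟩ := isTeachingPlan_cons_iff.mp hL
    rw [List.forall_mem_cons] at hk
    by_cases hcC' : c ∈ C'
    · calc TDmin C' ≤ TS C' c := TDmin_le_TS hcC'
        _ ≤ S.card := TS_le_card_of_isTeachingSet (hS.mono hC')
        _ ≤ k := hk.1
    · exact ih hL hk.2 fun x hx => Finset.mem_erase.mpr ⟨ne_of_mem_of_not_mem hx hcC', hC' hx⟩

end TeachingPlan

theorem stmt6_general {X : Type*} [Fintype X] [DecidableEq X]
    (C : Finset (X → Bool)) :
    RTD C = sSup {n | ∃ C' : Finset (X → Bool), C' ⊆ C ∧ C'.Nonempty ∧ TDmin C' = n} := by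
  set A := {n | ∃ C' : Finset (X → Bool), C' ⊆ C ∧ C'.Nonempty ∧ TDmin C' = n}
  have hA : BddAbove A := ⟨Fintype.card X, by rintro _ ⟨C', -, -, rfl⟩; exact TDmin_le_card C'⟩
  apply le_antisymm
  · obtain ⟨L, hL, hLA⟩ := exists_isTeachingPlan_of_forall_TDmin_le (M := sSup A)
      fun C' hC' hne => le_csSup hA ⟨C', hC', hne, rfl⟩
    exact Nat.sInf_le ⟨L, hL, hLA⟩
  · obtain ⟨L, hL, hLk⟩ : RTD C ∈ {k | ∃ L, IsTeachingPlan C L ∧ ∀ p ∈ L, p.2.card ≤ k} :=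
      Nat.sInf_mem ⟨_, exists_isTeachingPlan_of_forall_TDmin_le fun C' _ _ => TDmin_le_card C'⟩
    exact csSup_le' fun _ ⟨C', hC', hne, hn⟩ => hn ▸ TDmin_le_of_isTeachingPlan hL hLk hC' hne

theorem stmt6 {X : Type*} [Fintype X] [DecidableEq X]
    (C : Finset (X → Bool)) (hC : C.Nonempty) :
    RTD C = sSup {n | ∃ C' : Finset (X → Bool), C' ⊆ C ∧ C'.Nonempty ∧ TDmin C' = n} :=
  stmt6_general C
end

section
/- Shinohara's reduction correctness: Let G = (V, E) be a finite undirected graph. Define the concept class C over domain X = V consisting of: for each u ∈ V the concept c_u with c_u(v) = 0 iff v dominates u (v = u or {u,v} ∈ E), plus the all-one concept c*. Assume c* is distinct from all c_u (i.e., every vertex is dominated by some vertex, which always holds since u dominates u). Then a set T ⊆ V is a teaching set of c* with respect to C if and only if T is a dominating set of G. -/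
theorem stmt10 {V : Type*} [Fintype V] [DecidableEq V]
    (G : SimpleGraph V) [DecidableRel G.Adj]
    (cstar : V → Bool) (hcstar : cstar = fun _ => true)
    (cu : V → V → Bool) (hcu : ∀ u v, cu u v = !decide (v = u ∨ G.Adj u v))
    (C : Finset (V → Bool)) (hC : C = insert cstar (Finset.univ.image cu))
    (T : Finset V) :
    IsTeachingSet C cstar T ↔ ∀ u : V, ∃ v ∈ T, v = u ∨ G.Adj u v := by
  constructor
  · intro h u
    have hne : cu u ≠ cstar := by
      intro he
      have := congrFun he u
      simp [hcu, hcstar] at this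
    obtain ⟨x, hx, hd⟩ := h (cu u) (by simp [hC]) hne
    refine ⟨x, hx, ?_⟩
    simp [hcu, hcstar] at hd
    tauto
  · intro h c' hc' hne
    rw [hC] at hc'
    rcases Finset.mem_insert.1 hc' with h1 | h1
    · exact absurd h1 hne
    · obtain ⟨u, _, rfl⟩ := Finset.mem_image.1 h1
      obtain ⟨v, hv, hd⟩ := h u
      refine ⟨v, hv, ?_⟩
      simp [hcu, hcstar]
      tauto
end

section
/- In the concept class C of the RTD-hardness reduction, for every h ∈ H, a set S ⊆ X is a teaching set of c_h with respect to C_H = {c_{h'} : h' ∈ H} if and only if π₂(S ∩ (V × Z)) is a teaching set of h with respect to H. -/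
/-- The concept `c_h` of the reduction: all-one on `Z × V`, `h(z)` on `V × Z`. -/
def cH {V Z : Type*} (h : Z → Bool) : (V × Z) ⊕ (Z × V) → Bool
  | Sum.inl p => h p.2
  | Sum.inr _ => true

/-- The concept `c_{u,h}` of the reduction. -/
def cUH {V Z : Type*} [DecidableEq V] (G : SimpleGraph V) [DecidableRel G.Adj]
    (u : V) (h : Z → Bool) : (V × Z) ⊕ (Z × V) → Bool
  | Sum.inl p => !decide (p.1 = u ∨ G.Adj u p.1)
  | Sum.inr p => h p.1 && decide (u = p.2)

/-- The full concept class of the reduction. -/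
noncomputable def redC {V Z : Type*} [Fintype V] [DecidableEq V] [Fintype Z] [DecidableEq Z]
    (G : SimpleGraph V) [DecidableRel G.Adj] (k : ℕ) :
    Finset (((V × Z) ⊕ (Z × V)) → Bool) :=
  (gadgetH Z k).image (cH (V := V)) ∪
    ((Finset.univ : Finset V) ×ˢ gadgetH Z k).image fun p => cUH G p.1 p.2

theorem stmt11 {V Z : Type*} [Fintype V] [DecidableEq V] [Fintype Z] [DecidableEq Z]
    [Nonempty V] (k : ℕ) (hZ : Fintype.card Z = 2 * k + 1)
    (h : Z → Bool) (hh : h ∈ gadgetH Z k)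
    (S : Finset ((V × Z) ⊕ (Z × V))) :
    IsTeachingSet ((gadgetH Z k).image (cH (V := V))) (cH h) S ↔
      IsTeachingSet (gadgetH Z k) h
        (S.biUnion fun x => match x with
          | Sum.inl p => {p.2}
          | Sum.inr _ => (∅ : Finset Z)) := by
  obtain ⟨v⟩ := ‹Nonempty V›
  constructor
  · intro hT h' hh' hne
    have : cH (V := V) h' ≠ cH h := by
      intro he
      exact hne (funext fun z => congrFun he (Sum.inl (v, z)))
    obtain ⟨x, hxS, hx⟩ := hT (cH h') (Finset.mem_image_of_mem _ hh') this
    cases x with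
    | inl p =>
        refine ⟨p.2, Finset.mem_biUnion.2 ⟨Sum.inl p, hxS, by simp⟩, ?_⟩
        exact hx
    | inr p => exact absurd rfl hx
  · intro hT c' hc' hne
    obtain ⟨h', hh', rfl⟩ := Finset.mem_image.1 hc'
    have hne' : h' ≠ h := fun he => hne (by rw [he])
    obtain ⟨z, hz, hzne⟩ := hT h' hh' hne'
    obtain ⟨x, hxS, hxz⟩ := Finset.mem_biUnion.1 hz
    cases x with
    | inl p =>
        simp only [Finset.mem_singleton] at hxz
        exact ⟨Sum.inl p, hxS, by simpa [cH, hxz] using hzne⟩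
    | inr p => simp at hxz
end

section
/- In the concept class of the RTD-hardness reduction, for every u ∈ V and h ∈ H, a set S ⊆ X is a teaching set of c_{u,h} with respect to C_u = {c_{u,h'} : h' ∈ H} if and only if π₁(S ∩ (Z × {u})) is a teaching set of h with respect to H. -/
theorem stmt12 {V Z : Type*} [Fintype V] [DecidableEq V] [Fintype Z] [DecidableEq Z]
    (G : SimpleGraph V) [DecidableRel G.Adj]
    (k : ℕ) (hZ : Fintype.card Z = 2 * k + 1)
    (u : V) (h : Z → Bool) (hh : h ∈ gadgetH Z k)
    (S : Finset ((V × Z) ⊕ (Z × V))) :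
    IsTeachingSet ((gadgetH Z k).image (cUH G u)) (cUH G u h) S ↔
      IsTeachingSet (gadgetH Z k) h
        (S.biUnion fun x => match x with
          | Sum.inl _ => (∅ : Finset Z)
          | Sum.inr p => if p.2 = u then {p.1} else ∅) := by
  constructor
  · intro hS h' hh' hne
    have hmem : cUH G u h' ∈ (gadgetH Z k).image (cUH G u) :=
      Finset.mem_image_of_mem _ hh'
    have hcne : cUH G u h' ≠ cUH G u h := by
      intro hc
      apply hne
      funext z
      have := congrFun hc (Sum.inr (z, u))
      simpa [cUH] using this
    obtain ⟨x, hxS, hx⟩ := hS _ hmem hcne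
    match x with
    | Sum.inl p => simp [cUH] at hx
    | Sum.inr p =>
      simp only [cUH] at hx
      have hpu : p.2 = u := by
        by_contra hc
        apply hx
        have : decide (u = p.2) = false := decide_eq_false fun e => hc e.symm
        simp [this]
      refine ⟨p.1, ?_, ?_⟩
      · rw [Finset.mem_biUnion]
        exact ⟨Sum.inr p, hxS, by simp [hpu]⟩
      · intro hc
        apply hx
        simp [hc]
  · intro hT c' hc' hcne
    obtain ⟨h', hh', rfl⟩ := Finset.mem_image.mp hc'
    have hne : h' ≠ h := fun e => hcne (by rw [e])
    obtain ⟨z, hz, hzv⟩ := hT h' hh' hne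
    rw [Finset.mem_biUnion] at hz
    obtain ⟨x, hxS, hzx⟩ := hz
    match x with
    | Sum.inl p => simp at hzx
    | Sum.inr p =>
      by_cases hpu : p.2 = u
      · simp [hpu] at hzx
        subst hzx
        refine ⟨Sum.inr p, hxS, ?_⟩
        simp only [cUH, hpu]
        simpa using hzv
      · simp [hpu] at hzx
end

section
/- In the soundness argument of the reduction, no concept c_{u,h} can have a teaching set of size at most k with respect to the full class C: for every u ∈ V, h ∈ H, and S ⊆ X with |S| ≤ k, S is not a teaching set of c_{u,h} with respect to C. -/
theorem stmt15 {V Z : Type*} [Fintype V] [DecidableEq V] [Fintype Z] [DecidableEq Z]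
    (G : SimpleGraph V) [DecidableRel G.Adj]
    (k : ℕ) (hk : 1 ≤ k) (hZ : Fintype.card Z = 2 * k + 1)
    (u : V) (h : Z → Bool) (hh : h ∈ gadgetH Z k)
    (S : Finset ((V × Z) ⊕ (Z × V))) (hScard : S.card ≤ k) :
    ¬ IsTeachingSet (redC (Z := Z) G k) (cUH G u h) S := by
  classical
  intro hTS
  set T : Finset Z := Finset.univ.filter (fun z => Sum.inr (z, u) ∈ S) with hT
  have hinj : Function.Injective (fun z : Z => (Sum.inr (z, u) : (V × Z) ⊕ (Z × V))) := by
    intro a b hab; simpa using hab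
  have hTcard : T.card ≤ k := by
    calc T.card = (T.image (fun z => (Sum.inr (z, u) : (V × Z) ⊕ (Z × V)))).card :=
          (Finset.card_image_of_injective _ hinj).symm
      _ ≤ S.card := Finset.card_le_card (by
          intro x hx
          simp only [Finset.mem_image] at hx
          obtain ⟨z, hz, rfl⟩ := hx
          simpa [hT] using hz)
      _ ≤ k := hScard
  have hhcard : (Finset.univ.filter fun z => h z = true).card = k := by
    simpa [gadgetH] using hh
  -- Step 1: every one of h lies in T
  have hones : ∀ z, h z = true → z ∈ T := by
    by_contra hcon
    push_neg at hcon
    obtain ⟨z1, hz1, hz1T⟩ := hcon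
    -- find a zero of h outside T
    have hzeros : (Finset.univ.filter fun z => h z = false).card = k + 1 := by
      have := Finset.card_filter_add_card_filter_not
        (s := (Finset.univ : Finset Z)) (p := fun z => h z = true)
      simp only [Finset.card_univ, hZ, hhcard] at this
      have he : (Finset.univ.filter fun z => ¬ h z = true)
          = (Finset.univ.filter fun z => h z = false) := by
        apply Finset.filter_congr; intro z _; simp
      rw [he] at this
      omega
    have hnon : ((Finset.univ.filter fun z => h z = false) \ T).Nonempty := by
      rw [← Finset.card_pos]
      have := Finset.le_card_sdiff T (Finset.univ.filter fun z => h z = false)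
      omega
    obtain ⟨z0, hz0mem⟩ := hnon
    rw [Finset.mem_sdiff, Finset.mem_filter] at hz0mem
    obtain ⟨⟨-, hz0⟩, hz0T⟩ := hz0mem
    have hz01 : z0 ≠ z1 := by intro e; rw [e, hz1] at hz0; simp at hz0
    set h' : Z → Bool := fun z => if z = z1 then false else if z = z0 then true else h z with hh'
    have hh'mem : h' ∈ gadgetH Z k := by
      simp only [gadgetH, Finset.mem_filter, Finset.mem_univ, true_and]
      have hset : (Finset.univ.filter fun z => h' z = true)
          = insert z0 ((Finset.univ.filter fun z => h z = true).erase z1) := by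
        ext z
        by_cases e1 : z = z1
        · subst e1; simp [hh', hz01.symm]
        · by_cases e0 : z = z0
          · subst e0; simp [hh', hz01, hz0]
          · simp [hh', e1, e0]
      rw [hset, Finset.card_insert_of_notMem (by simp [hz0]),
        Finset.card_erase_of_mem (by simp [hz1]), hhcard]
      omega
    have hmem : cUH G u h' ∈ redC (Z := Z) G k := by
      apply Finset.mem_union_right
      exact Finset.mem_image.mpr ⟨(u, h'), Finset.mem_product.mpr ⟨Finset.mem_univ _, hh'mem⟩, rfl⟩
    have hne : cUH G u h' ≠ cUH G u h := by
      intro e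
      have := congrFun e (Sum.inr (z1, u))
      simp [cUH, hh', hz1] at this
    obtain ⟨x, hxS, hxne⟩ := hTS _ hmem hne
    apply hxne
    match x with
    | Sum.inl p => simp [cUH]
    | Sum.inr ⟨z, v⟩ =>
      by_cases huv : u = v
      · subst huv
        have hzT : z ∈ T := by simp [hT]; exact hxS
        have hz1' : z ≠ z1 := fun e => hz1T (e ▸ hzT)
        have hz0' : z ≠ z0 := fun e => hz0T (e ▸ hzT)
        simp [cUH, hh', hz1', hz0']
      · simp [cUH, huv]
  -- Step 2: S is exactly the image of the ones of h
  have hOsub : (Finset.univ.filter fun z => h z = true).image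
      (fun z => (Sum.inr (z, u) : (V × Z) ⊕ (Z × V))) ⊆ S := by
    intro x hx
    simp only [Finset.mem_image, Finset.mem_filter] at hx
    obtain ⟨z, ⟨-, hz⟩, rfl⟩ := hx
    have := hones z hz
    simpa [hT] using this
  have hScardO : ((Finset.univ.filter fun z => h z = true).image
      (fun z => (Sum.inr (z, u) : (V × Z) ⊕ (Z × V)))).card = k := by
    rw [Finset.card_image_of_injective _ hinj, hhcard]
  have hSeq : S = (Finset.univ.filter fun z => h z = true).image
      (fun z => (Sum.inr (z, u) : (V × Z) ⊕ (Z × V))) :=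
    (Finset.eq_of_subset_of_card_le hOsub (by omega)).symm
  -- Step 3: c_h is not distinguished
  have hmemH : cH (V := V) h ∈ redC (Z := Z) G k :=
    Finset.mem_union_left _ (Finset.mem_image_of_mem _ hh)
  obtain ⟨z1, hz1mem⟩ : (Finset.univ.filter fun z => h z = true).Nonempty := by
    rw [← Finset.card_pos, hhcard]; omega
  have hz1 : h z1 = true := (Finset.mem_filter.mp hz1mem).2
  have hneH : cH (V := V) h ≠ cUH G u h := by
    intro e
    have := congrFun e (Sum.inl (u, z1))
    simp [cH, cUH, hz1] at this
  obtain ⟨x, hxS, hxne⟩ := hTS _ hmemH hneH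
  apply hxne
  rw [hSeq] at hxS
  simp only [Finset.mem_image, Finset.mem_filter] at hxS
  obtain ⟨z, ⟨-, hz⟩, rfl⟩ := hxS
  simp [cH, cUH, hz]
end

section
/- If S ⊆ X is a teaching set of c_h w.r.t. the full class C with |S| ≤ k (setup of the reduction), then π₁(S) ⊆ V is a dominating set of G of size at most k. -/
lemma biUnion_card_le_of_small {α β : Type*} [DecidableEq β] (S : Finset α)
    (f : α → Finset β) (hf : ∀ a, (f a).card ≤ 1) : (S.biUnion f).card ≤ S.card :=
  le_trans Finset.card_biUnion_le
    (le_trans (Finset.sum_le_sum fun i _ => hf i) (by simp))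

theorem stmt16 {V Z : Type*} [Fintype V] [DecidableEq V] [Fintype Z] [DecidableEq Z]
    (G : SimpleGraph V) [DecidableRel G.Adj]
    (k : ℕ) (hk : 1 ≤ k) (hZ : Fintype.card Z = 2 * k + 1)
    (h : Z → Bool) (hh : h ∈ gadgetH Z k)
    (S : Finset ((V × Z) ⊕ (Z × V))) (hScard : S.card ≤ k)
    (hTS : IsTeachingSet (redC (Z := Z) G k) (cH h) S) :
    (S.biUnion fun x => match x with
        | Sum.inl p => {p.1}
        | Sum.inr _ => (∅ : Finset V)).card ≤ k ∧
      ∀ u : V, ∃ v ∈ (S.biUnion fun x => match x with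
        | Sum.inl p => {p.1}
        | Sum.inr _ => (∅ : Finset V)), v = u ∨ G.Adj u v := by
  classical
  have hcard : (S.biUnion fun x => match x with
      | Sum.inl p => ({p.1} : Finset V)
      | Sum.inr _ => ∅).card ≤ k :=
    le_trans (biUnion_card_le_of_small S _ (by rintro (p|p) <;> simp)) hScard
  refine ⟨hcard, fun u => ?_⟩
  set S₀ : Finset Z := S.biUnion (fun x => match x with
    | Sum.inl p => ({p.2} : Finset Z)
    | Sum.inr _ => ∅) with hS₀def
  have hmemS₀ : ∀ z : Z, z ∈ S₀ ↔ ∃ v, Sum.inl (v, z) ∈ S := by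
    intro z
    simp only [hS₀def, Finset.mem_biUnion]
    constructor
    · rintro ⟨(p|p), hp, hz⟩
      · simp only [Finset.mem_singleton] at hz
        exact ⟨p.1, by simpa [hz] using hp⟩
      · simp at hz
    · rintro ⟨v, hv⟩; exact ⟨Sum.inl (v, z), hv, by simp⟩
  have hS₀card : S₀.card ≤ k := by
    rw [hS₀def]
    exact le_trans (biUnion_card_le_of_small S _ (by rintro (p|p) <;> simp)) hScard
  have hones : (Finset.univ.filter fun z => h z = true).card = k := by
    simpa [gadgetH] using hh
  have hzeros : (Finset.univ.filter fun z => h z = false).card = k + 1 := by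
    have h1 := Finset.card_filter_add_card_filter_not
      (s := (Finset.univ : Finset Z)) (p := fun z => h z = true)
    have h2 : (Finset.univ.filter fun z => ¬ h z = true)
        = Finset.univ.filter fun z => h z = false := by
      apply Finset.filter_congr; intro z _; simp
    rw [h2, Finset.card_univ, hZ, hones] at h1
    omega
  have hsub : (Finset.univ.filter fun z => h z = true) ⊆ S₀ := by
    intro z₁ hz₁
    by_contra hz₁S
    have hz₁h : h z₁ = true := (Finset.mem_filter.mp hz₁).2
    have hnotsub : ¬ (Finset.univ.filter fun z => h z = false) ⊆ S₀ := by
      intro hsub'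
      have := Finset.card_le_card hsub'
      omega
    obtain ⟨z₀, hz₀mem, hz₀S⟩ := Finset.not_subset.mp hnotsub
    have hz₀h : h z₀ = false := (Finset.mem_filter.mp hz₀mem).2
    set h' : Z → Bool := fun z => if z = z₁ then false else if z = z₀ then true else h z
      with hh'
    have hh'mem : h' ∈ gadgetH Z k := by
      simp only [gadgetH, Finset.mem_filter, Finset.mem_univ, true_and]
      have heq : (Finset.univ.filter fun z => h' z = true)
          = insert z₀ ((Finset.univ.filter fun z => h z = true).erase z₁) := by
        ext z
        simp only [Finset.mem_filter, Finset.mem_univ, true_and, Finset.mem_insert,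
          Finset.mem_erase, hh']
        by_cases e1 : z = z₁ <;> by_cases e0 : z = z₀ <;> simp_all
      rw [heq, Finset.card_insert_of_notMem (by simp [Finset.mem_erase, hz₀h]),
        Finset.card_erase_of_mem hz₁, hones]
      omega
    have hne' : cH (V := V) h' ≠ cH h := by
      intro e
      have := congrFun e (Sum.inl (u, z₁))
      simp [cH, hh', hz₁h] at this
    obtain ⟨x, hxS, hx⟩ := hTS _ (Finset.mem_union_left _ (Finset.mem_image_of_mem _ hh'mem)) hne'
    match x with
    | Sum.inr p => exact hx rfl
    | Sum.inl p =>
      have hz : p.2 ∈ S₀ := (hmemS₀ p.2).mpr ⟨p.1, hxS⟩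
      have e1 : p.2 ≠ z₁ := fun e => hz₁S (e ▸ hz)
      have e0 : p.2 ≠ z₀ := fun e => hz₀S (e ▸ hz)
      exact hx (by simp [cH, hh', e1, e0])
  have hS₀eq : (Finset.univ.filter fun z => h z = true) = S₀ :=
    Finset.eq_of_subset_of_card_le hsub (by omega)
  -- all elements of S are inl
  have hSleft : ∀ x ∈ S, x.isLeft = true := by
    have hSl : True := trivial
    have himg : S₀ ⊆ (S.filter (fun x : (V × Z) ⊕ (Z × V) => x.isLeft = true)).image (fun x => match x with
        | Sum.inl p => p.2 | Sum.inr p => p.1) := by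
      intro z hz
      obtain ⟨v, hv⟩ := (hmemS₀ z).mp hz
      exact Finset.mem_image.mpr ⟨Sum.inl (v, z), Finset.mem_filter.mpr ⟨hv, rfl⟩, rfl⟩
    have h1 : k ≤ (S.filter (fun x : (V × Z) ⊕ (Z × V) => x.isLeft = true)).card := by
      have := Finset.card_le_card himg
      have h2 := Finset.card_image_le (s := S.filter (fun x : (V × Z) ⊕ (Z × V) => x.isLeft = true)) (f := fun x : (V × Z) ⊕ (Z × V) => match x with
        | Sum.inl p => p.2 | Sum.inr p => p.1)
      have h3 : S₀.card = k := by rw [← hS₀eq, hones]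
      omega
    have h5 : S.filter (fun x : (V × Z) ⊕ (Z × V) => x.isLeft = true) = S :=
      Finset.eq_of_subset_of_card_le (Finset.filter_subset _ _) (by omega)
    intro x hx
    rw [← h5] at hx
    exact (Finset.mem_filter.mp hx).2
  -- now use c_{u,h}
  obtain ⟨z₂, hz₂⟩ : ∃ z, h z = false := by
    have : (Finset.univ.filter fun z => h z = false).Nonempty := by
      rw [← Finset.card_pos]; omega
    obtain ⟨z, hz⟩ := this
    exact ⟨z, (Finset.mem_filter.mp hz).2⟩
  have hcne : cUH G u h ≠ cH (V := V) h := by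
    intro e
    have := congrFun e (Sum.inr (z₂, u))
    simp [cUH, cH, hz₂] at this
  have hcmem : cUH G u h ∈ redC (Z := Z) G k := by
    apply Finset.mem_union_right
    exact Finset.mem_image.mpr ⟨(u, h), by simp [Finset.mem_product, hh], rfl⟩
  obtain ⟨x, hxS, hx⟩ := hTS _ hcmem hcne
  match x, hSleft x hxS with
  | Sum.inl p, _ =>
    have hz : p.2 ∈ S₀ := (hmemS₀ p.2).mpr ⟨p.1, hxS⟩
    have hzh : h p.2 = true := by
      rw [← hS₀eq] at hz
      exact (Finset.mem_filter.mp hz).2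
    have hdom : p.1 = u ∨ G.Adj u p.1 := by
      by_contra hc
      apply hx
      simp [cH, cUH, hzh, hc]
    refine ⟨p.1, ?_, ?_⟩
    · exact Finset.mem_biUnion.mpr ⟨Sum.inl p, hxS, by simp⟩
    · rcases hdom with h1 | h1
      · exact Or.inl h1
      · exact Or.inr h1
end
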